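/- arXiv:1503.07561 — 9 statements merged into one kernel-verified Lean document; each statement's English description precedes it below -/
import Mathlib

section
/- For complex matrices F and G of the same dimensions, F F* = G G* if and only if there exists a unitary matrix U such that F = G U. -/
open Matrix
open scoped InnerProductSpace

section aux

variable {n k : ℕ}

private noncomputable abbrev eL {a b : ℕ} (M : Matrix (Fin a) (Fin b) ℂ) :
    EuclideanSpace ℂ (Fin b) →ₗ[ℂ] EuclideanSpace ℂ (Fin a) :=
  Matrix.toEuclideanLin M

private lemma eL_mul {a b c : ℕ} (M : Matrix (Fin a) (Fin b) ℂ)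
    (N : Matrix (Fin b) (Fin c) ℂ) : eL (M * N) = (eL M).comp (eL N) := by
  simp [eL, Matrix.toEuclideanLin_eq_toLin, Matrix.toLin_mul _ (PiLp.basisFun 2 ℂ (Fin b)) _]

end aux

/-- `F F* = G G*` iff `F = G U` for some unitary `U`. -/
theorem mul_conjTranspose_eq_iff_exists_unitary {n k : ℕ}
    (F G : Matrix (Fin n) (Fin k) ℂ) :
    F * Fᴴ = G * Gᴴ ↔
      ∃ U : Matrix (Fin k) (Fin k) ℂ, U ∈ Matrix.unitaryGroup (Fin k) ℂ ∧ F = G * U := by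
  constructor
  · intro hFG
    -- set up the Euclidean linear maps
    set f : EuclideanSpace ℂ (Fin n) →ₗ[ℂ] EuclideanSpace ℂ (Fin k) := eL Gᴴ with hf
    set g : EuclideanSpace ℂ (Fin n) →ₗ[ℂ] EuclideanSpace ℂ (Fin k) := eL Fᴴ with hg
    -- inner products agree
    have key : ∀ x y, ⟪g x, g y⟫_ℂ = ⟪f x, f y⟫_ℂ := by
      intro x y
      have h1 : eL F (g y) = eL (F * Fᴴ) y := by rw [eL_mul]; rfl
      have h2 : eL G (f y) = eL (G * Gᴴ) y := by rw [eL_mul]; rfl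
      have hFa : g = LinearMap.adjoint (eL F) := by
        simpa [hg, eL] using Matrix.toEuclideanLin_conjTranspose_eq_adjoint F
      have hGa : f = LinearMap.adjoint (eL G) := by
        simpa [hf, eL] using Matrix.toEuclideanLin_conjTranspose_eq_adjoint G
      calc ⟪g x, g y⟫_ℂ = ⟪x, eL F (g y)⟫_ℂ := by
              rw [hFa]; exact LinearMap.adjoint_inner_left _ _ _
        _ = ⟪x, eL (G * Gᴴ) y⟫_ℂ := by rw [h1, hFG]
        _ = ⟪x, eL G (f y)⟫_ℂ := by rw [h2]
        _ = ⟪f x, f y⟫_ℂ := by rw [hGa]; exact (LinearMap.adjoint_inner_left _ _ _).symm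
    have keynorm : ∀ x, ‖g x‖ = ‖f x‖ := by
      intro x
      have h2 : ((‖g x‖ : ℂ))^2 = ((‖f x‖ : ℂ))^2 := by
        simpa [inner_self_eq_norm_sq_to_K] using key x x
      have h3 : ‖g x‖^2 = ‖f x‖^2 := by exact_mod_cast h2
      nlinarith [norm_nonneg (g x), norm_nonneg (f x)]
    -- kernels agree
    have hker : LinearMap.ker f ≤ LinearMap.ker g := by
      intro x hx
      simp only [LinearMap.mem_ker] at hx ⊢
      have := keynorm x
      rw [hx, norm_zero] at this
      exact norm_eq_zero.mp this
    -- the isometry on the range of f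
    let h0 : (_ ⧸ LinearMap.ker f) →ₗ[ℂ] EuclideanSpace ℂ (Fin k) :=
      (LinearMap.ker f).liftQ g hker
    let h : (LinearMap.range f : Submodule ℂ (EuclideanSpace ℂ (Fin k))) →ₗ[ℂ]
        EuclideanSpace ℂ (Fin k) := h0.comp f.quotKerEquivRange.symm.toLinearMap
    have happ : ∀ x : EuclideanSpace ℂ (Fin n), h ⟨f x, LinearMap.mem_range_self f x⟩ = g x := by
      intro x
      simp only [h, LinearMap.comp_apply, LinearEquiv.coe_coe]
      rw [LinearMap.quotKerEquivRange_symm_apply_image f x]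
      rfl
    have hnorm : ∀ v : (LinearMap.range f : Submodule ℂ (EuclideanSpace ℂ (Fin k))),
        ‖h v‖ = ‖v‖ := by
      rintro ⟨v, x, rfl⟩
      rw [happ x]
      exact keynorm x
    let hiso : (LinearMap.range f : Submodule ℂ (EuclideanSpace ℂ (Fin k))) →ₗᵢ[ℂ]
        EuclideanSpace ℂ (Fin k) := ⟨h, hnorm⟩
    let W := hiso.extend
    have hW : ∀ x, W (f x) = g x := by
      intro x
      have := hiso.extend_apply ⟨f x, LinearMap.mem_range_self f x⟩
      rw [this]
      exact happ x
    -- convert back to matrices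
    let M : Matrix (Fin k) (Fin k) ℂ := Matrix.toEuclideanLin.symm W.toLinearMap
    have hMe : eL M = W.toLinearMap := by simp [M, eL]
    have hMG : M * Gᴴ = Fᴴ := by
      apply Matrix.toEuclideanLin.injective
      have : eL (M * Gᴴ) = eL Fᴴ := by
        rw [eL_mul, hMe]
        exact LinearMap.ext fun x => hW x
      exact this
    have hMadj : Mᴴ * M = 1 := by
      apply Matrix.toEuclideanLin.injective
      have : eL (Mᴴ * M) = eL (1 : Matrix (Fin k) (Fin k) ℂ) := by
        rw [eL_mul]
        have hadj : eL Mᴴ = LinearMap.adjoint (eL M) :=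
          Matrix.toEuclideanLin_conjTranspose_eq_adjoint M
        rw [hadj, hMe]
        refine LinearMap.ext fun x => ?_
        refine ext_inner_right ℂ fun y => ?_
        rw [LinearMap.comp_apply, LinearMap.adjoint_inner_left]
        simp only [LinearIsometry.coe_toLinearMap]
        rw [W.inner_map_map]
        simp [eL, Matrix.toEuclideanLin_eq_toLin]
      exact this
    refine ⟨Mᴴ, ?_, ?_⟩
    · rw [Matrix.mem_unitaryGroup_iff]
      simpa [Matrix.star_eq_conjTranspose, Matrix.conjTranspose_conjTranspose] using hMadj
    · have := congrArg Matrix.conjTranspose hMG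
      simpa [Matrix.conjTranspose_mul] using this.symm
  · rintro ⟨U, hU, rfl⟩
    have h1 : U * star U = 1 := hU.2
    calc G * U * (G * U)ᴴ = G * (U * Uᴴ) * Gᴴ := by
          rw [Matrix.conjTranspose_mul]; rw [Matrix.mul_assoc, Matrix.mul_assoc, Matrix.mul_assoc]
      _ = G * Gᴴ := by rw [show U * Uᴴ = 1 from h1, Matrix.mul_one]
end

section
/- Let A ∈ ℂ^{n×n} with ρ(A) < 1 and B ∈ ℂ^{n×m}. If w : ℕ → ℂ^m is square-summable and x is defined by x₀ = 0, x_{k+1} = A x_k + B w_k, then x is square-summable. -/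
/-!
By Gelfand's formula, `ρ(A) < 1` makes `k ↦ ‖A ^ k‖` summable. Unrolling the recursion writes the
state as a convolution, `x (k + 1) = ∑ j ≤ k, A ^ j B w (k - j)`, and Young's inequality
`ℓ¹ ∗ ℓ² ⊆ ℓ²` puts it in `ℓ²`. Viewing vectors in Euclidean space turns `∑ i, ‖x k i‖ ^ 2` into
the square of a norm, so the argument runs for an arbitrary bounded operator.
-/

open Matrix Filter Finset WithLp

theorem summable_norm_pow_of_spectralRadius_lt_one {𝔸 : Type*} [NormedRing 𝔸]
    [NormedAlgebra ℂ 𝔸] [CompleteSpace 𝔸] {a : 𝔸} (ha : spectralRadius ℂ a < 1) :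
    Summable fun k ↦ ‖a ^ k‖ := by
  obtain ⟨r, hρr, hr1⟩ := ENNReal.lt_iff_exists_nnreal_btwn.mp ha
  have hr1 : r < 1 := mod_cast hr1
  refine .of_norm_bounded_eventually_nat (summable_geometric_of_lt_one r.2 hr1) ?_
  have hgelfand := spectrum.pow_nnnorm_pow_one_div_tendsto_nhds_spectralRadius a
  filter_upwards [hgelfand.eventually_lt_const hρr, eventually_ge_atTop 1] with k hk hk1
  rw [one_div, ENNReal.rpow_inv_lt_iff (by positivity), ENNReal.rpow_natCast] at hk
  rw [norm_norm]
  exact_mod_cast hk.le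

theorem eq_sum_range_pow_smul_of_succ_eq_smul_add {M E : Type*} [Monoid M] [AddCommMonoid E]
    [DistribMulAction M E] {a : M} {u x : ℕ → E} (hx0 : x 0 = 0)
    (hx : ∀ k, x (k + 1) = a • x k + u k) (k : ℕ) :
    x (k + 1) = ∑ j ∈ range (k + 1), a ^ j • u (k - j) := by
  induction k with
  | zero => simp [hx, hx0]
  | succ k ih =>
    rw [hx, ih, sum_range_succ' _ (k + 1), smul_sum, pow_zero, one_smul, Nat.sub_zero]
    congr 1
    refine sum_congr rfl fun j _ ↦ ?_
    rw [Nat.add_sub_add_right, pow_succ', mul_smul]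

/-- Young's inequality `ℓ¹ ∗ ℓ² ⊆ ℓ²`: weighted Cauchy–Schwarz bounds the square of the
convolution by `‖a‖₁` times the convolution of `a` with `b ^ 2`, a Cauchy product of summable
sequences. -/
theorem summable_sq_sum_range_mul {a b : ℕ → ℝ} (ha0 : ∀ k, 0 ≤ a k) (ha : Summable a)
    (hb : Summable fun k ↦ b k ^ 2) :
    Summable fun k ↦ (∑ j ∈ range (k + 1), a j * b (k - j)) ^ 2 := by
  have hconv : Summable fun k ↦ ∑ j ∈ range (k + 1), a j * b (k - j) ^ 2 :=
    summable_sum_mul_range_of_summable_mul (f := a) (g := fun k ↦ b k ^ 2)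
      (ha.mul_of_nonneg hb ha0 fun k ↦ sq_nonneg (b k))
  refine .of_nonneg_of_le (fun _ ↦ sq_nonneg _) (fun k ↦ ?_) (hconv.mul_left (∑' j, a j))
  calc (∑ j ∈ range (k + 1), a j * b (k - j)) ^ 2
      ≤ (∑ j ∈ range (k + 1), a j) * ∑ j ∈ range (k + 1), a j * b (k - j) ^ 2 :=
        sum_sq_le_sum_mul_sum_of_sq_le_mul _ (fun j _ ↦ ha0 j)
          (fun j _ ↦ mul_nonneg (ha0 j) (sq_nonneg _))
          fun j _ ↦ by rw [mul_pow, sq (a j), mul_assoc]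
    _ ≤ (∑' j, a j) * ∑ j ∈ range (k + 1), a j * b (k - j) ^ 2 := by
        gcongr
        · exact sum_nonneg fun j _ ↦ mul_nonneg (ha0 j) (sq_nonneg _)
        · exact ha.sum_le_tsum _ fun j _ ↦ ha0 j

theorem summable_sq_norm_apply {𝕜 E F : Type*} [NontriviallyNormedField 𝕜]
    [SeminormedAddCommGroup E] [NormedSpace 𝕜 E] [SeminormedAddCommGroup F] [NormedSpace 𝕜 F]
    (S : E →L[𝕜] F) {w : ℕ → E} (hw : Summable fun k ↦ ‖w k‖ ^ 2) :
    Summable fun k ↦ ‖S (w k)‖ ^ 2 := by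
  refine .of_nonneg_of_le (fun _ ↦ sq_nonneg _) (fun k ↦ ?_) (hw.mul_left (‖S‖ ^ 2))
  rw [← mul_pow]
  gcongr
  exact S.le_opNorm _

theorem summable_sq_norm_of_summable_norm_pow {𝕜 E : Type*} [NontriviallyNormedField 𝕜]
    [SeminormedAddCommGroup E] [NormedSpace 𝕜 E] {T : E →L[𝕜] E}
    (hT : Summable fun k ↦ ‖T ^ k‖) {u x : ℕ → E} (hu : Summable fun k ↦ ‖u k‖ ^ 2)
    (hx0 : x 0 = 0) (hx : ∀ k, x (k + 1) = T (x k) + u k) :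
    Summable fun k ↦ ‖x k‖ ^ 2 := by
  refine (summable_nat_add_iff 1).mp <| .of_nonneg_of_le (fun _ ↦ sq_nonneg _) (fun k ↦ ?_)
    (summable_sq_sum_range_mul (fun _ ↦ norm_nonneg _) hT hu)
  rw [eq_sum_range_pow_smul_of_succ_eq_smul_add (a := T) hx0 hx k]
  gcongr
  exact (norm_sum_le _ _).trans (sum_le_sum fun j _ ↦ (T ^ j).le_opNorm _)

/-- With `ρ(A) < 1`, the state response to a square-summable input is
square-summable. -/
theorem state_response_square_summable {n m : ℕ}
    (A : Matrix (Fin n) (Fin n) ℂ) (B : Matrix (Fin n) (Fin m) ℂ)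
    (hA : spectralRadius ℂ A < 1)
    (w : ℕ → Fin m → ℂ) (hw : Summable (fun k => ∑ i, ‖w k i‖ ^ 2))
    (x : ℕ → Fin n → ℂ) (hx0 : x 0 = 0)
    (hx : ∀ k, x (k + 1) = A.mulVec (x k) + B.mulVec (w k)) :
    Summable (fun k => ∑ i, ‖x k i‖ ^ 2) := by
  let T := toEuclideanCLM (𝕜 := ℂ) A
  let S := (toLpLin (R := ℂ) 2 2 B).toContinuousLinearMap
  have hT : spectralRadius ℂ T < 1 := by
    rwa [spectralRadius, AlgEquiv.spectrum_eq]
  have hnorm : ∀ {k} (v : Fin k → ℂ), ∑ i, ‖v i‖ ^ 2 = ‖toLp 2 v‖ ^ 2 :=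
    fun v ↦ (EuclideanSpace.norm_sq_eq _).symm
  simp only [hnorm] at hw ⊢
  have hxT : ∀ k, toLp 2 (x (k + 1)) = T (toLp 2 (x k)) + S (toLp 2 (w k)) :=
    fun k ↦ by rw [hx]; rfl
  have hTpow := summable_norm_pow_of_spectralRadius_lt_one hT
  have hSw := summable_sq_norm_apply S hw
  exact summable_sq_norm_of_summable_norm_pow hTpow hSw (by simp [hx0]) hxT
end

section
/- Let A = a ∈ ℂ with 0 < |a| < 1, a ≠ 0, B = 1, and let v = (1/(1-a), 1)ᵀ ∈ ℂ². Then V = v v* satisfies [a 1] V [a 1]* = [1 0] V [1 0]* and V ⪰ 0, but there is no l₂ signal w with x₀ = 0, x_{k+1} = a x_k + w_k such that ∑_k [x_k; w_k][x_k; w_k]* = V. -/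
open Matrix
open scoped ComplexOrder

/-!
If `v v* = ∑ₖ uₖ uₖ*`, then for every `y ⊥ v` we get `0 = y* (v v*) y = ∑ₖ |y* uₖ|²`, so every
`uₖ` is parallel to `v`. For `uₖ = (xₖ, wₖ)` and `v = (1/(1-a), 1)` this means `xₖ = wₖ/(1-a)`;
together with `x₀ = 0` the recursion `xₖ₊₁ = a xₖ + wₖ` then forces `x = w = 0`, so the gramian
would vanish, whereas `V₁₁ = 1`.
-/

noncomputable def outer {ι : Type*} [Fintype ι] (v : ι → ℂ) : Matrix ι ι ℂ :=
  Matrix.of fun i j => v i * star (v j)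

section Outer

variable {ι : Type*} [Fintype ι]

theorem outer_eq_vecMulVec (v : ι → ℂ) : outer v = vecMulVec v (star v) := rfl

theorem outer_posSemidef (v : ι → ℂ) : (outer v).PosSemidef :=
  posSemidef_vecMulVec_self_star v

theorem mul_outer_mul_conjTranspose {κ : Type*} [Fintype κ] (M : Matrix κ ι ℂ) (v : ι → ℂ) :
    M * outer v * Mᴴ = outer (M *ᵥ v) := by
  rw [outer_eq_vecMulVec, outer_eq_vecMulVec, mul_vecMulVec, vecMulVec_mul, star_mulVec]

theorem outer_ne_zero {v : ι → ℂ} (hv : v ≠ 0) : outer v ≠ 0 := by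
  obtain ⟨i, hi⟩ := Function.ne_iff.mp hv
  intro h
  have : v i * star (v i) = 0 := congrFun (congrFun h i) i
  exact hi ((CStarRing.mul_star_self_eq_zero_iff _).mp this)

theorem star_dotProduct_outer_mulVec (u y : ι → ℂ) :
    star y ⬝ᵥ (outer u *ᵥ y) = (star y ⬝ᵥ u) * star (star y ⬝ᵥ u) := by
  rw [outer_eq_vecMulVec, vecMulVec_mulVec, ← star_dotProduct]
  simp [dotProduct_smul, mul_comm]

theorem hasSum_star_dotProduct_mulVec {α : Type*} {f : α → Matrix ι ι ℂ} {V : Matrix ι ι ℂ}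
    (hf : HasSum f V) (y : ι → ℂ) :
    HasSum (fun k => star y ⬝ᵥ (f k *ᵥ y)) (star y ⬝ᵥ (V *ᵥ y)) := by
  let q : Matrix ι ι ℂ →+ ℂ :=
    AddMonoidHom.mk' (fun M => star y ⬝ᵥ (M *ᵥ y)) fun M N => by
      rw [add_mulVec, dotProduct_add]
  exact hf.map q (continuous_const.dotProduct (continuous_id.matrix_mulVec continuous_const))

theorem star_dotProduct_eq_zero_of_hasSum_outer {α : Type*} {u : α → ι → ℂ} {v y : ι → ℂ}
    (hu : HasSum (fun k => outer (u k)) (outer v)) (hy : star y ⬝ᵥ v = 0) (k : α) :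
    star y ⬝ᵥ u k = 0 := by
  have h := hasSum_star_dotProduct_mulVec hu y
  simp only [star_dotProduct_outer_mulVec, hy, zero_mul] at h
  have := congrFun ((hasSum_zero_iff_of_nonneg fun k => mul_star_self_nonneg _).mp h) k
  exact (CStarRing.mul_star_self_eq_zero_iff _).mp this

end Outer

theorem input_eq_zero_of_state_eq_mul_input {K : Type*} [Field K] {a c : K} {x w : ℕ → K}
    (hc : c ≠ 0) (hx0 : x 0 = 0) (hrec : ∀ k, x (k + 1) = a * x k + w k)
    (hxw : ∀ k, x k = c * w k) : w = 0 := by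
  have hw : ∀ k, x k = 0 → w k = 0 := fun k hk =>
    (mul_eq_zero.mp ((hxw k).symm.trans hk)).resolve_left hc
  have hx : ∀ k, x k = 0 := by
    intro k
    induction k with
    | zero => exact hx0
    | succ k ih => rw [hrec, ih, hw k ih, mul_zero, add_zero]
  exact funext fun k => hw k (hx k)

theorem cone_mem_not_gramian_general (a : ℂ) (ha : ‖a‖ < 1)
    (V : Matrix (Fin 2) (Fin 2) ℂ) (hV : V = outer ![1 / (1 - a), 1]) :
    (!![a, 1] * V * (!![a, 1])ᴴ = !![(1 : ℂ), 0] * V * (!![(1 : ℂ), 0])ᴴ ∧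
        V.PosSemidef) ∧
      ¬ ∃ (w : ℕ → ℂ) (x : ℕ → ℂ),
          Summable (fun k => ‖w k‖ ^ 2) ∧ x 0 = 0 ∧
          (∀ k, x (k + 1) = a * x k + w k) ∧
          (∑' k, outer ![x k, w k]) = V := by
  have h1a : 1 - a ≠ 0 := sub_ne_zero.mpr fun h => by simp [← h] at ha
  set c := 1 / (1 - a) with hc
  have hV0 : V ≠ 0 := hV ▸ outer_ne_zero (Function.ne_iff.mpr ⟨1, by simp⟩)
  refine ⟨⟨?_, hV ▸ outer_posSemidef _⟩, ?_⟩
  · have hac : c * a + 1 = c := by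
      rw [hc]
      field_simp
      ring
    rw [hV, mul_outer_mul_conjTranspose, mul_outer_mul_conjTranspose]
    congr 1
    ext i
    fin_cases i
    simpa using hac
  rintro ⟨w, x, -, hx0, hrec, hsum⟩
  by_cases hS : Summable fun k => outer ![x k, w k]
  · have hgram : HasSum (fun k => outer ![x k, w k]) (outer ![c, 1]) := by
      rw [← hV, ← hsum]
      exact hS.hasSum
    have hxw (k : ℕ) : x k = c * w k := by
      simpa [dotProduct, ← sub_eq_add_neg, sub_eq_zero] using
        star_dotProduct_eq_zero_of_hasSum_outer hgram (y := ![1, -star c]) (by simp [dotProduct]) k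
    have hw := input_eq_zero_of_state_eq_mul_input (one_div_ne_zero h1a) hx0 hrec hxw
    have hx : x = 0 := funext fun k => by simp [hxw, hw]
    exact hV0 (by simp [← hsum, hx, hw, outer])
  · exact hV0 (hsum ▸ tsum_eq_zero_of_not_summable hS)

/-- For the scalar system `x_{k+1} = a x_k + w_k` with `0 < |a| < 1`, the
rank-one matrix `V = v v*` with `v = (1/(1-a), 1)` lies in the cone `𝒞` but is not a
gramian of any `l₂` disturbance: `𝒮 ⊊ 𝒞`. -/
theorem cone_mem_not_gramian (a : ℂ) (ha0 : a ≠ 0) (ha : ‖a‖ < 1)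
    (V : Matrix (Fin 2) (Fin 2) ℂ) (hV : V = outer ![1 / (1 - a), 1]) :
    (!![a, 1] * V * (!![a, 1])ᴴ = !![(1 : ℂ), 0] * V * (!![(1 : ℂ), 0])ᴴ ∧
        V.PosSemidef) ∧
      ¬ ∃ (w : ℕ → ℂ) (x : ℕ → ℂ),
          Summable (fun k => ‖w k‖ ^ 2) ∧ x 0 = 0 ∧
          (∀ k, x (k + 1) = a * x k + w k) ∧
          (∑' k, outer ![x k, w k]) = V :=
  cone_mem_not_gramian_general a ha V hV
end

section
/- Every V in the cone 𝒞 = {V ∈ ℍ₊^{n+m} : [A B] V [A B]* = [I 0] V [I 0]*} can be written as a sum V = ∑_{i=1}^{n+m} V_i where each V_i ∈ 𝒞 and rank(V_i) ≤ 1. -/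
open Matrix
open scoped ComplexOrder

/-!
Write `V = F Fᴴ`. The cone condition says `X Xᴴ = Y Yᴴ` for `X = [A B] F` and `Y = [I 0] F`,
so `‖Xᴴ v‖ = ‖Yᴴ v‖` for all `v` and there is a unitary `U` with `U Xᴴ = Yᴴ`. In an orthonormal
eigenbasis `wᵢ` of `U⁻¹` (a unitary is normal, so its commuting Hermitian real and imaginary parts
diagonalise it simultaneously) one gets `Y wᵢ = μᵢ X wᵢ` with `|μᵢ| = 1`. Hence every rank-one
matrix `gᵢ gᵢᴴ`, `gᵢ = F wᵢ`, lies in the cone, and `V = ∑ᵢ gᵢ gᵢᴴ` because `∑ᵢ wᵢ wᵢᴴ = 1`.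
-/

section RCLike

open Module LinearMap

variable {𝕜 E : Type*} [RCLike 𝕜] [NormedAddCommGroup E] [InnerProductSpace 𝕜 E]
  [FiniteDimensional 𝕜 E] {k : ℕ}

theorem LinearMap.IsSymmetric.exists_orthonormalBasis_eigenvectors_of_commute
    (hk : finrank 𝕜 E = k) {A B : E →ₗ[𝕜] E} (hA : A.IsSymmetric) (hB : B.IsSymmetric)
    (hAB : Commute A B) :
    ∃ (w : OrthonormalBasis (Fin k) 𝕜 E) (a b : Fin k → 𝕜),
      ∀ i, A (w i) = a i • w i ∧ B (w i) = b i • w i := by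
  set V : 𝕜 × 𝕜 → Submodule 𝕜 E := fun μ ↦ End.eigenspace A μ.2 ⊓ End.eigenspace B μ.1
  have hV : DirectSum.IsInternal V := hA.directSum_isInternal_of_commute hB hAB
  have : Fintype {μ // V μ ≠ ⊥} :=
    (Submodule.finite_ne_bot_of_iSupIndep hV.submodule_iSupIndep).fintype
  have hV' : DirectSum.IsInternal fun μ : {μ // V μ ≠ ⊥} ↦ V μ :=
    DirectSum.isInternal_ne_bot_iff.mpr hV
  have hVorth : OrthogonalFamily 𝕜 (fun μ : {μ // V μ ≠ ⊥} ↦ V μ) fun μ ↦ (V μ).subtypeₗᵢ :=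
    (hA.orthogonalFamily_eigenspace_inf_eigenspace hB).comp Subtype.val_injective
  let μ i := (hV'.subordinateOrthonormalBasisIndex hk i hVorth).1
  refine ⟨hV'.subordinateOrthonormalBasis hk hVorth, fun i ↦ (μ i).2, fun i ↦ (μ i).1,
    fun i ↦ ?_⟩
  have hw := hV'.subordinateOrthonormalBasis_subordinate hk i hVorth
  exact ⟨End.mem_eigenspace_iff.mp hw.1, End.mem_eigenspace_iff.mp hw.2⟩

theorem LinearMap.exists_linearIsometryEquiv_comp_eq_of_norm_eq {M : Type*} [AddCommGroup M]
    [Module 𝕜 M] {S T : M →ₗ[𝕜] E} (h : ∀ x, ‖S x‖ = ‖T x‖) :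
    ∃ U : E ≃ₗᵢ[𝕜] E, ∀ x, U (T x) = S x := by
  have hbdd : ∃ C : ℝ, ∀ x, ‖S x‖ ≤ C * ‖T x‖ := ⟨1, fun x ↦ by rw [h, one_mul]⟩
  have hL : ∀ x, S.compLeftInverse T ⟨T x, x, rfl⟩ = S x :=
    fun x ↦ compLeftInverse_apply_of_bdd _ _ hbdd x _ rfl
  let L : range T →ₗᵢ[𝕜] E :=
    ⟨(S.compLeftInverse T).toLinearMap, by rintro ⟨_, x, rfl⟩; simp [hL, h]⟩
  refine ⟨L.extend.toLinearIsometryEquiv rfl, fun x ↦ ?_⟩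
  simpa [L] using (L.extend_apply ⟨T x, x, rfl⟩).trans (hL x)

end RCLike

section Complex

open Module LinearMap ComplexStarModule

variable {E : Type*} [NormedAddCommGroup E] [InnerProductSpace ℂ E] [FiniteDimensional ℂ E]
  {k : ℕ}

theorem LinearMap.exists_orthonormalBasis_eigenvectors_of_isStarNormal (hk : finrank ℂ E = k)
    {T : E →ₗ[ℂ] E} (hT : IsStarNormal T) :
    ∃ (w : OrthonormalBasis (Fin k) ℂ E) (μ : Fin k → ℂ), ∀ i, T (w i) = μ i • w i := by
  have hre : (ℜ T : E →ₗ[ℂ] E).IsSymmetric := (isSymmetric_iff_isSelfAdjoint _).mpr (ℜ T).2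
  have him : (ℑ T : E →ₗ[ℂ] E).IsSymmetric := (isSymmetric_iff_isSelfAdjoint _).mpr (ℑ T).2
  obtain ⟨w, a, b, hw⟩ := hre.exists_orthonormalBasis_eigenvectors_of_commute hk him
    (isStarNormal_iff_commute_realPart_imaginaryPart.mp hT)
  refine ⟨w, fun i ↦ a i + Complex.I * b i, fun i ↦ ?_⟩
  conv_lhs => rw [← realPart_add_I_smul_imaginaryPart T]
  simp [(hw i).1, (hw i).2, add_smul, smul_smul]

theorem LinearIsometryEquiv.exists_orthonormalBasis_eigenvectors (hk : finrank ℂ E = k)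
    (U : E ≃ₗᵢ[ℂ] E) :
    ∃ (w : OrthonormalBasis (Fin k) ℂ E) (μ : Fin k → ℂ),
      (∀ i, ‖μ i‖ = 1) ∧ ∀ i, U (w i) = μ i • w i := by
  have hU : IsStarNormal U.toLinearMap := by
    refine ⟨?_⟩
    rw [commute_iff_eq, star_eq_adjoint, U.adjoint_toLinearMap_eq_symm]
    ext x
    simp
  obtain ⟨w, μ, hw⟩ := exists_orthonormalBasis_eigenvectors_of_isStarNormal hk hU
  refine ⟨w, μ, fun i ↦ ?_, hw⟩
  simpa [norm_smul, w.orthonormal.1 i] using (congr_arg norm (hw i)).symm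

end Complex

namespace Matrix

open LinearMap

variable {𝕜 : Type*} [RCLike 𝕜] {N K : Type*}

theorem inner_toEuclideanLin_conjTranspose [Fintype N] [DecidableEq N] [Fintype K]
    [DecidableEq K] (M : Matrix N K 𝕜) (v w : EuclideanSpace 𝕜 N) :
    inner 𝕜 (toEuclideanLin Mᴴ v) (toEuclideanLin Mᴴ w) =
      inner 𝕜 v (toEuclideanLin (M * Mᴴ) w) := by
  rw [toEuclideanLin_conjTranspose_eq_adjoint, adjoint_inner_left,
    ← toEuclideanLin_conjTranspose_eq_adjoint, toLpLin_mul_same]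
  rfl

theorem exists_orthonormalBasis_mulVec_eq_smul_mulVec_of_mul_conjTranspose_eq [Fintype N]
    [DecidableEq N] [Fintype K] [DecidableEq K] {k : ℕ} (hk : Fintype.card K = k)
    {X Y : Matrix N K ℂ} (h : X * Xᴴ = Y * Yᴴ) :
    ∃ (w : OrthonormalBasis (Fin k) ℂ (EuclideanSpace ℂ K)) (μ : Fin k → ℂ),
      (∀ i, ‖μ i‖ = 1) ∧ ∀ i, Y *ᵥ (w i).ofLp = μ i • X *ᵥ (w i).ofLp := by
  obtain ⟨U, hU⟩ : ∃ U : EuclideanSpace ℂ K ≃ₗᵢ[ℂ] EuclideanSpace ℂ K,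
      ∀ v, U (toEuclideanLin Xᴴ v) = toEuclideanLin Yᴴ v :=
    exists_linearIsometryEquiv_comp_eq_of_norm_eq fun v ↦ by
      simp only [@norm_eq_sqrt_re_inner ℂ, inner_toEuclideanLin_conjTranspose, h]
  obtain ⟨w, μ, hμ, hw⟩ :=
    U.symm.exists_orthonormalBasis_eigenvectors (by rw [finrank_euclideanSpace, hk])
  refine ⟨w, μ, hμ, fun i ↦ ?_⟩
  have : toEuclideanLin Y (w i) = μ i • toEuclideanLin X (w i) := by
    refine ext_inner_left ℂ fun v ↦ ?_
    rw [inner_smul_right, ← adjoint_inner_left, ← adjoint_inner_left,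
      ← toEuclideanLin_conjTranspose_eq_adjoint, ← toEuclideanLin_conjTranspose_eq_adjoint,
      ← hU, U.inner_map_eq_flip, hw, inner_smul_right]
  simpa using congr_arg WithLp.ofLp this

theorem mul_vecMulVec_star_mul_conjTranspose [Fintype K] (M : Matrix N K 𝕜) (v : K → 𝕜) :
    M * vecMulVec v (star v) * Mᴴ = vecMulVec (M *ᵥ v) (star (M *ᵥ v)) := by
  rw [mul_vecMulVec, vecMulVec_mul, star_mulVec]

theorem vecMulVec_smul_star_smul {μ : 𝕜} (hμ : ‖μ‖ = 1) (v : N → 𝕜) :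
    vecMulVec (μ • v) (star (μ • v)) = vecMulVec v (star v) := by
  rw [star_smul, smul_vecMulVec, vecMulVec_smul, smul_smul, RCLike.star_def, RCLike.mul_conj, hμ]
  simp

theorem _root_.OrthonormalBasis.sum_vecMulVec_star_eq_one [Fintype K] [DecidableEq K]
    {ι : Type*} [Fintype ι] (w : OrthonormalBasis ι 𝕜 (EuclideanSpace 𝕜 K)) :
    ∑ i, vecMulVec (w i).ofLp (star (w i).ofLp) = 1 := by
  have := congr_arg (fun T : EuclideanSpace 𝕜 K →L[𝕜] EuclideanSpace 𝕜 K ↦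
    toEuclideanLin.symm (T : EuclideanSpace 𝕜 K →ₗ[𝕜] EuclideanSpace 𝕜 K)) w.sum_rankOne_eq_id
  simpa [map_sum, InnerProductSpace.symm_toEuclideanLin_rankOne] using this

theorem mul_conjTranspose_eq_sum_vecMulVec [Fintype K] [DecidableEq K] {ι : Type*} [Fintype ι]
    (F : Matrix N K 𝕜) (w : OrthonormalBasis ι 𝕜 (EuclideanSpace 𝕜 K)) :
    F * Fᴴ = ∑ i, vecMulVec (F *ᵥ (w i).ofLp) (star (F *ᵥ (w i).ofLp)) := by
  simp_rw [← mul_vecMulVec_star_mul_conjTranspose]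
  rw [← Matrix.sum_mul, ← Matrix.mul_sum, w.sum_vecMulVec_star_eq_one, Matrix.mul_one]

open MatrixOrder in
theorem PosSemidef.exists_eq_mul_conjTranspose [Fintype N] [DecidableEq N] {V : Matrix N N 𝕜}
    (hV : V.PosSemidef) : ∃ F : Matrix N N 𝕜, V = F * Fᴴ := by
  obtain ⟨F, rfl⟩ := CStarAlgebra.nonneg_iff_eq_star_mul_self.mp hV.nonneg
  exact ⟨Fᴴ, by rw [conjTranspose_conjTranspose]; rfl⟩

end Matrix

/-- The cone `𝒞 = {V ⪰ 0 : [A B] V [A B]ᴴ = [I 0] V [I 0]ᴴ}`. -/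
def coneC {n m : ℕ} (A : Matrix (Fin n) (Fin n) ℂ) (B : Matrix (Fin n) (Fin m) ℂ) :
    Set (Matrix (Fin n ⊕ Fin m) (Fin n ⊕ Fin m) ℂ) :=
  {V | V.PosSemidef ∧
    (fromCols A B) * V * (fromCols A B)ᴴ =
      (fromCols (1 : Matrix (Fin n) (Fin n) ℂ) (0 : Matrix (Fin n) (Fin m) ℂ)) * V *
        (fromCols (1 : Matrix (Fin n) (Fin n) ℂ) (0 : Matrix (Fin n) (Fin m) ℂ))ᴴ}

theorem vecMulVec_star_mem_coneC {n m : ℕ} {A : Matrix (Fin n) (Fin n) ℂ}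
    {B : Matrix (Fin n) (Fin m) ℂ} {g : Fin n ⊕ Fin m → ℂ} {μ : ℂ} (hμ : ‖μ‖ = 1)
    (hg : fromCols (1 : Matrix (Fin n) (Fin n) ℂ) (0 : Matrix (Fin n) (Fin m) ℂ) *ᵥ g =
      μ • fromCols A B *ᵥ g) :
    vecMulVec g (star g) ∈ coneC A B :=
  ⟨posSemidef_vecMulVec_self_star g, by
    rw [mul_vecMulVec_star_mul_conjTranspose, mul_vecMulVec_star_mul_conjTranspose, hg,
      vecMulVec_smul_star_smul hμ]⟩

/-- Every element of the cone `𝒞` is a sum of `n + m` rank-at-most-one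
elements of `𝒞`. -/
theorem cone_rank_one_decomposition {n m : ℕ}
    (A : Matrix (Fin n) (Fin n) ℂ) (B : Matrix (Fin n) (Fin m) ℂ)
    (V : Matrix (Fin n ⊕ Fin m) (Fin n ⊕ Fin m) ℂ) (hV : V ∈ coneC A B) :
    ∃ f : Fin (n + m) → Matrix (Fin n ⊕ Fin m) (Fin n ⊕ Fin m) ℂ,
      V = ∑ i, f i ∧ ∀ i, f i ∈ coneC A B ∧ (f i).rank ≤ 1 := by
  obtain ⟨hpsd, hcone⟩ := hV
  obtain ⟨F, rfl⟩ := hpsd.exists_eq_mul_conjTranspose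
  have hXY : (fromCols A B * F) * (fromCols A B * F)ᴴ =
      (fromCols (1 : Matrix (Fin n) (Fin n) ℂ) (0 : Matrix (Fin n) (Fin m) ℂ) * F) *
        (fromCols (1 : Matrix (Fin n) (Fin n) ℂ) (0 : Matrix (Fin n) (Fin m) ℂ) * F)ᴴ := by
    simpa only [conjTranspose_mul, Matrix.mul_assoc] using hcone
  obtain ⟨w, μ, hμ, hw⟩ :=
    exists_orthonormalBasis_mulVec_eq_smul_mulVec_of_mul_conjTranspose_eq (k := n + m) (by simp)
      hXY
  refine ⟨fun i ↦ vecMulVec (F *ᵥ (w i).ofLp) (star (F *ᵥ (w i).ofLp)),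
    mul_conjTranspose_eq_sum_vecMulVec F w,
    fun i ↦ ⟨vecMulVec_star_mem_coneC (hμ i) ?_, rank_vecMulVec_le _ _⟩⟩
  simpa only [mulVec_mulVec] using hw i
end

section
/- Let A ∈ ℂ^{n×n} be Schur stable and B ∈ ℂ^{n×m}. There exists a positive definite matrix V in the cone 𝒞 = {V ∈ ℍ₊^{n+m} : [A B] V [A B]* = [I 0] V [I 0]*} if and only if the pair (A, B) is controllable. -/
/-!
If `(A, B)` is not controllable, Cayley–Hamilton shows that the left null vectors of the
controllability matrix form a nonzero subspace invariant under `x ↦ x A` and annihilating `B`;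
it contains a left eigenvector `x A = μ x` with `x B = 0` (the Hautus test). Testing the cone
equation against `x` gives `|μ|² q = q` for `q = [x 0] V [x 0]ᴴ`, and `|μ| < 1` forces `q = 0`,
so `V` is not positive definite. Conversely, for Schur stable `A` the gramian
`W = ∑ₖ Aᵏ B (Aᵏ B)ᴴ` converges and solves `A W Aᴴ + B Bᴴ = W`, so `diag(W, I)` lies in the cone;
its first `n` terms sum to `C Cᴴ` for the controllability matrix `C`, which is positive definite
when `C` has full row rank.
-/

open Matrix
open scoped ComplexOrder

/-- The controllability matrix `[B, AB, …, A^{n-1}B]`. -/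
noncomputable def ctrbMatrix {n m : ℕ} (A : Matrix (Fin n) (Fin n) ℂ)
    (B : Matrix (Fin n) (Fin m) ℂ) : Matrix (Fin n) (Fin n × Fin m) ℂ :=
  Matrix.of fun i kj => ((A ^ (kj.1 : ℕ)) * B) i kj.2

open Filter NNReal ENNReal

theorem Matrix.rank_eq_card_iff_vecMul_injective {K ι κ : Type*} [Field K] [Fintype ι] [Fintype κ]
    (M : Matrix ι κ K) : M.rank = Fintype.card ι ↔ Function.Injective M.vecMul := by
  rw [vecMul_injective_iff, linearIndependent_iff_card_eq_finrank_span, rank_eq_finrank_span_row,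
    Set.finrank, eq_comm]

open Polynomial in
theorem Matrix.pow_mem_span_pow_lt_card {R ι : Type*} [CommRing R] [Nontrivial R] [Fintype ι]
    [DecidableEq ι] (A : Matrix ι ι R) (k : ℕ) :
    A ^ k ∈ Submodule.span R ((A ^ ·) '' Set.Iio (Fintype.card ι)) := by
  have hdeg : (X ^ k %ₘ A.charpoly).degree < Fintype.card ι :=
    (degree_modByMonic_lt _ A.charpoly_monic).trans_eq A.charpoly_degree_eq_dim
  rw [pow_eq_aeval_mod_charpoly, aeval_eq_sum_range]
  refine Submodule.sum_mem _ fun i _ => ?_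
  by_cases hi : i < Fintype.card ι
  · exact Submodule.smul_mem _ _ (Submodule.subset_span ⟨i, hi, rfl⟩)
  · rw [coeff_eq_zero_of_degree_lt (hdeg.trans_le (by exact_mod_cast not_lt.mp hi)), zero_smul]
    exact Submodule.zero_mem _

theorem Matrix.mem_spectrum_of_vecMul_eq_smul {K ι : Type*} [Field K] [Fintype ι] [DecidableEq ι]
    {A : Matrix ι ι K} {μ : K} {x : ι → K} (hx : x ≠ 0) (h : x ᵥ* A = μ • x) :
    μ ∈ spectrum K A := by
  rw [spectrum.mem_iff, isUnit_iff_isUnit_det, isUnit_iff_ne_zero, not_not,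
    ← exists_vecMul_eq_zero_iff]
  exact ⟨x, hx, by simp [vecMul_sub, h, Algebra.algebraMap_eq_smul_one, vecMul_smul]⟩

theorem Matrix.isClosed_setOf_posSemidef {ι 𝕜 : Type*} [Fintype ι] [RCLike 𝕜] :
    IsClosed {M : Matrix ι ι 𝕜 | M.PosSemidef} := by
  simp only [Matrix.posSemidef_iff_dotProduct_mulVec, Set.ofPred_and, Set.ofPred_forall]
  refine .inter (isClosed_eq (by fun_prop) continuous_id) (isClosed_iInter fun x => ?_)
  exact isClosed_le continuous_const (by fun_prop)

theorem Matrix.PosSemidef.tsum {ι κ 𝕜 : Type*} [Fintype ι] [RCLike 𝕜] {f : κ → Matrix ι ι 𝕜}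
    (hf : ∀ k, (f k).PosSemidef) : (∑' k, f k).PosSemidef := by
  by_cases hs : Summable f
  · exact isClosed_setOf_posSemidef.mem_of_tendsto hs.hasSum
      (.of_forall fun s => posSemidef_sum s fun k _ => hf k)
  · rw [tsum_eq_zero_of_not_summable hs]
    exact .zero

theorem Matrix.PosDef.fromBlocks_zero {𝕜 ι κ : Type*} [RCLike 𝕜] [Fintype ι] [Fintype κ]
    [DecidableEq ι] [DecidableEq κ] {A : Matrix ι ι 𝕜} {D : Matrix κ κ 𝕜} (hA : A.PosDef)
    (hD : D.PosDef) : (fromBlocks A 0 0 D).PosDef := by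
  have := hA.isUnit.invertible
  have hpsd := (PosDef.fromBlocks₁₁ (0 : Matrix ι κ 𝕜) D hA).mpr (by simpa using hD.posSemidef)
  rw [conjTranspose_zero] at hpsd
  rw [hpsd.posDef_iff_isUnit, isUnit_iff_isUnit_det, det_fromBlocks_zero₂₁]
  exact (isUnit_iff_isUnit_det _ |>.mp hA.isUnit).mul (isUnit_iff_isUnit_det _ |>.mp hD.isUnit)

theorem Matrix.fromCols_mul_fromBlocks_zero_mul_conjTranspose {R l ι κ : Type*} [Semiring R]
    [StarRing R] [Fintype ι] [Fintype κ] (A : Matrix l ι R) (B : Matrix l κ R) (W : Matrix ι ι R)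
    (U : Matrix κ κ R) :
    fromCols A B * fromBlocks W 0 0 U * (fromCols A B)ᴴ = A * W * Aᴴ + B * U * Bᴴ := by
  rw [fromCols_mul_fromBlocks, conjTranspose_fromCols_eq_fromRows_conjTranspose,
    fromCols_mul_fromRows]
  simp

theorem Matrix.vecMul_eq_zero_of_mul_mul_conjTranspose_eq {𝕜 ι κ : Type*} [RCLike 𝕜] [Fintype ι]
    [Fintype κ] {V : Matrix ι ι 𝕜} (hV : V.PosDef) {C D : Matrix κ ι 𝕜}
    (hCD : C * V * Cᴴ = D * V * Dᴴ) {μ : 𝕜} (hμ : ‖μ‖ ≠ 1) {x : κ → 𝕜}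
    (hx : x ᵥ* C = μ • (x ᵥ* D)) : x ᵥ* D = 0 := by
  have hform : ∀ E : Matrix κ ι 𝕜,
      x ⬝ᵥ ((E * V * Eᴴ) *ᵥ star x) = (x ᵥ* E) ⬝ᵥ (V *ᵥ star (x ᵥ* E)) := fun E => by
    rw [star_vecMul, ← mulVec_mulVec, ← mulVec_mulVec, dotProduct_mulVec]
  have key := congrArg (fun M => x ⬝ᵥ (M *ᵥ star x)) hCD
  simp only [hform, hx, star_smul, mulVec_smul, smul_dotProduct, dotProduct_smul, smul_eq_mul,
    RCLike.star_def] at key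
  set q := (x ᵥ* D) ⬝ᵥ (V *ᵥ star (x ᵥ* D))
  have hμ2 : (‖μ‖ : 𝕜) ^ 2 - 1 ≠ 0 := by
    rw [sub_ne_zero]
    exact_mod_cast (pow_eq_one_iff_of_nonneg (norm_nonneg μ) two_ne_zero).not.mpr hμ
  have hq : q = 0 :=
    (mul_eq_zero.mp (by linear_combination key - q * RCLike.mul_conj μ)).resolve_left hμ2
  by_contra hy
  have hpos := hV.dotProduct_mulVec_pos (star_ne_zero.mpr hy)
  rw [star_star] at hpos
  exact hpos.ne' hq

theorem Module.End.exists_hasEigenvector_mem {K V : Type*} [Field K] [IsAlgClosed K]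
    [AddCommGroup V] [Module K V] [FiniteDimensional K V] (f : End K V) {N : Submodule K V}
    (hN : N ≠ ⊥) (hf : ∀ v ∈ N, f v ∈ N) : ∃ μ, ∃ v ∈ N, f.HasEigenvector μ v := by
  have := Submodule.nontrivial_iff_ne_bot.mpr hN
  obtain ⟨μ, hμ⟩ := exists_eigenvalue (f.restrict hf)
  obtain ⟨v, hv, hv0⟩ := hμ.exists_hasEigenvector
  exact ⟨μ, v, v.2, eigenspace_restrict_le_eigenspace f hf μ ⟨v, hv, rfl⟩,
    by simpa using hv0⟩

theorem eventually_nnnorm_pow_le_of_spectralRadius_lt {𝔸 : Type*} [NormedRing 𝔸]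
    [NormedAlgebra ℂ 𝔸] [CompleteSpace 𝔸] (a : 𝔸) {r : ℝ≥0} (h : spectralRadius ℂ a < r) :
    ∀ᶠ k in atTop, ‖a ^ k‖₊ ≤ r ^ k := by
  have gelfand := spectrum.pow_nnnorm_pow_one_div_tendsto_nhds_spectralRadius a
  filter_upwards [gelfand.eventually_lt_const h, eventually_ne_atTop 0] with k hk hk0
  have := ENNReal.rpow_lt_rpow hk (by positivity : (0:ℝ) < k)
  rw [← ENNReal.rpow_mul, one_div, inv_mul_cancel₀ (by exact_mod_cast hk0), ENNReal.rpow_one,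
    ENNReal.rpow_natCast] at this
  exact_mod_cast this.le

section Controllability

variable {n m : ℕ} (A : Matrix (Fin n) (Fin n) ℂ) (B : Matrix (Fin n) (Fin m) ℂ)

theorem vecMul_pow_mul_eq_zero_of_vecMul_ctrbMatrix_eq_zero {x : Fin n → ℂ}
    (hx : x ᵥ* ctrbMatrix A B = 0) (k : ℕ) : x ᵥ* (A ^ k * B) = 0 := by
  have hlt : ∀ i < n, x ᵥ* (A ^ i * B) = 0 := fun i hi => funext fun j =>
    congrFun hx (⟨i, hi⟩, j)
  refine Submodule.span_induction (p := fun M _ => x ᵥ* (M * B) = 0) ?_ (by simp)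
    (fun M N _ _ hM hN => by simp [Matrix.add_mul, vecMul_add, hM, hN])
    (fun c M _ hM => by simp [Matrix.smul_mul, vecMul_smul, hM]) (A.pow_mem_span_pow_lt_card k)
  rintro _ ⟨i, hi, rfl⟩
  exact hlt i (by simpa using hi)

theorem rank_ctrbMatrix_eq_of_forall_left_eigenvector
    (h : ∀ (μ : ℂ) (x : Fin n → ℂ), x ᵥ* A = μ • x → x ᵥ* B = 0 → x = 0) :
    (ctrbMatrix A B).rank = n := by
  refine ((rank_eq_card_iff_vecMul_injective _).mpr ?_).trans (Fintype.card_fin n)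
  rw [← coe_vecMulLinear, ← LinearMap.ker_eq_bot, Submodule.eq_bot_iff]
  intro x hx
  by_contra hx0
  let N : Submodule ℂ (Fin n → ℂ) := ⨅ k : ℕ, LinearMap.ker (vecMulLinear (A ^ k * B))
  have hxN : x ∈ N := Submodule.mem_iInf _ |>.mpr fun k =>
    vecMul_pow_mul_eq_zero_of_vecMul_ctrbMatrix_eq_zero A B hx k
  have hN : ∀ v ∈ N, vecMulLinear A v ∈ N := fun v hv => Submodule.mem_iInf _ |>.mpr fun k => by
    simpa [vecMul_vecMul, ← Matrix.mul_assoc, ← pow_succ'] using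
      (Submodule.mem_iInf _).mp hv (k + 1)
  obtain ⟨μ, v, hvN, hv⟩ :=
    Module.End.exists_hasEigenvector_mem _ (fun hbot => hx0 (by simpa [hbot] using hxN)) hN
  refine hv.2 (h μ v hv.apply_eq_smul ?_)
  simpa using (Submodule.mem_iInf _).mp hvN 0

noncomputable def ctrbGramian : Matrix (Fin n) (Fin n) ℂ :=
  ∑' k : ℕ, A ^ k * B * (A ^ k * B)ᴴ

section FrobeniusNorm

attribute [local instance] Matrix.frobeniusSeminormedAddCommGroup Matrix.frobeniusNormedRing
  Matrix.frobeniusNormedAlgebra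

theorem summable_pow_mul_mul_conjTranspose (hA : spectralRadius ℂ A < 1) :
    Summable fun k : ℕ => A ^ k * B * (A ^ k * B)ᴴ := by
  obtain ⟨r, hAr, hr⟩ := ENNReal.lt_iff_exists_nnreal_btwn.mp hA
  have hr1 : (r : ℝ) < 1 := mod_cast hr
  refine .of_norm_bounded_eventually_nat
    ((summable_geometric_of_lt_one (r := (r : ℝ) ^ 2) (by positivity)
      (by nlinarith [r.coe_nonneg])).mul_left (‖B‖ ^ 2)) ?_
  filter_upwards [eventually_nnnorm_pow_le_of_spectralRadius_lt A hAr] with k hk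
  have hk' : ‖A ^ k‖ ≤ r ^ k := mod_cast hk
  calc ‖A ^ k * B * (A ^ k * B)ᴴ‖ ≤ ‖A ^ k * B‖ * ‖(A ^ k * B)ᴴ‖ := frobenius_norm_mul _ _
    _ = ‖A ^ k * B‖ ^ 2 := by rw [frobenius_norm_conjTranspose, sq]
    _ ≤ (‖A ^ k‖ * ‖B‖) ^ 2 := by gcongr; exact frobenius_norm_mul _ _
    _ ≤ (r ^ k * ‖B‖) ^ 2 := by gcongr
    _ = ‖B‖ ^ 2 * ((r : ℝ) ^ 2) ^ k := by ring

end FrobeniusNorm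

theorem ctrbGramian_stein (hA : spectralRadius ℂ A < 1) :
    A * ctrbGramian A B * Aᴴ + B * Bᴴ = ctrbGramian A B := by
  have hs := summable_pow_mul_mul_conjTranspose A B hA
  have hshift : ∀ k, A * (A ^ k * B * (A ^ k * B)ᴴ) * Aᴴ =
      A ^ (k + 1) * B * (A ^ (k + 1) * B)ᴴ := fun k => by
    simp only [pow_succ', Matrix.mul_assoc, conjTranspose_mul]
  calc A * ctrbGramian A B * Aᴴ + B * Bᴴ
      = ∑' k, A ^ (k + 1) * B * (A ^ (k + 1) * B)ᴴ + B * Bᴴ := by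
        rw [ctrbGramian, ← hs.tsum_mul_left, ← (hs.mul_left A).tsum_mul_right]
        simp only [hshift]
    _ = ctrbGramian A B := by
        rw [ctrbGramian, hs.tsum_eq_zero_add]
        simp [add_comm]

theorem ctrbMatrix_mul_conjTranspose :
    ctrbMatrix A B * (ctrbMatrix A B)ᴴ = ∑ k ∈ Finset.range n, A ^ k * B * (A ^ k * B)ᴴ := by
  rw [← Fin.sum_univ_eq_sum_range (fun k => A ^ k * B * (A ^ k * B)ᴴ)]
  ext i j
  simp only [ctrbMatrix, mul_apply, Fintype.sum_prod_type, Matrix.sum_apply, conjTranspose_apply,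
    of_apply]

theorem posDef_ctrbGramian (hA : spectralRadius ℂ A < 1) (hrank : (ctrbMatrix A B).rank = n) :
    (ctrbGramian A B).PosDef := by
  have hinj : Function.Injective (ctrbMatrix A B).vecMul :=
    (rank_eq_card_iff_vecMul_injective _).mp (by rw [hrank, Fintype.card_fin])
  rw [ctrbGramian, ← (summable_pow_mul_mul_conjTranspose A B hA).sum_add_tsum_nat_add n,
    ← ctrbMatrix_mul_conjTranspose]
  exact (PosDef.mul_conjTranspose_self _ hinj).add_posSemidef
    (PosSemidef.tsum fun _ => posSemidef_self_mul_conjTranspose _)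

end Controllability

/-- the cone `𝒞` contains a positive definite matrix iff `(A, B)` is
controllable. -/
theorem cone_posDef_iff_controllable {n m : ℕ}
    (A : Matrix (Fin n) (Fin n) ℂ) (B : Matrix (Fin n) (Fin m) ℂ)
    (hA : spectralRadius ℂ A < 1) :
    (∃ V, V ∈ coneC A B ∧ V.PosDef) ↔ (ctrbMatrix A B).rank = n := by
  constructor
  · rintro ⟨V, ⟨-, hcone⟩, hV⟩
    refine rank_ctrbMatrix_eq_of_forall_left_eigenvector A B fun μ x hxA hxB => ?_
    by_contra hx
    have hμ : ‖μ‖ < 1 := mod_cast ENNReal.coe_lt_one_iff.mp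
      ((le_iSup₂ (α := ℝ≥0∞) μ (mem_spectrum_of_vecMul_eq_smul hx hxA)).trans_lt hA)
    have hx0 := vecMul_eq_zero_of_mul_mul_conjTranspose_eq hV hcone hμ.ne (x := x)
      (by ext (i | i) <;> simp [vecMul_fromCols, hxA, hxB])
    exact hx (funext fun i => by simpa [vecMul_fromCols] using congrFun hx0 (Sum.inl i))
  · intro hrank
    have hV := (posDef_ctrbGramian A B hA hrank).fromBlocks_zero (PosDef.one (n := Fin m))
    refine ⟨_, ⟨hV.posSemidef, ?_⟩, hV⟩
    rw [fromCols_mul_fromBlocks_zero_mul_conjTranspose,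
      fromCols_mul_fromBlocks_zero_mul_conjTranspose]
    simpa using ctrbGramian_stein A B hA
end

section
/- Let A ∈ ℂ^{n×n} be Schur stable and B ∈ ℂ^{n×m}. If there exist X ≻ 0 (positive definite), W ≻ 0, and R such that A X A* − X + B R* A* + A R B* + B W B* = 0 and [X R; R* W] ⪰ 0, then (A, B) is controllable. -/
/-!
If `(A, B)` were not controllable, the vectors `w` with `w Aᵏ B = 0` for all `k` would form a
nonzero subspace, invariant under `w ↦ w A`, so it would contain a left eigenvector `w A = μ w`
with `w B = 0`. Pairing the equation with `w` on the left and `w*` on the right kills every term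
containing `B` or `Bᴴ` and leaves `(|μ|² - 1) · w X w* = 0`. Since `X ≻ 0` this forces `|μ| = 1`,
whereas `μ` lies in the spectrum of `A`, whose spectral radius is `< 1`.
-/

open Matrix
open scoped ComplexOrder

theorem Module.End.exists_hasEigenvector_mem_of_mapsTo {K V : Type*} [Field K] [IsAlgClosed K]
    [AddCommGroup V] [Module K V] [FiniteDimensional K V] (f : Module.End K V)
    {p : Submodule K V} (hp : p ≠ ⊥) (hfp : ∀ x ∈ p, f x ∈ p) :
    ∃ μ, ∃ x ∈ p, f.HasEigenvector μ x := by
  have : Nontrivial p := Submodule.nontrivial_iff_ne_bot.2 hp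
  obtain ⟨μ, hμ⟩ := Module.End.exists_eigenvalue (f.restrict hfp)
  obtain ⟨x, hx_mem, hx_ne⟩ := hμ.exists_hasEigenvector
  exact ⟨μ, x, x.2, f.eigenspace_restrict_le_eigenspace hfp μ ⟨x, hx_mem, rfl⟩,
    by simpa using hx_ne⟩

theorem spectrum.nnnorm_le_spectralRadius {𝕜 A : Type*} [NormedField 𝕜] [Ring A] [Algebra 𝕜 A]
    {a : A} {k : 𝕜} (hk : k ∈ spectrum 𝕜 a) : (‖k‖₊ : ENNReal) ≤ spectralRadius 𝕜 a :=
  le_iSup₂ (f := fun k (_ : k ∈ spectrum 𝕜 a) => (‖k‖₊ : ENNReal)) k hk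

namespace Matrix

section Controllability

variable {R K ι κ : Type*} [Fintype ι] [DecidableEq ι]

theorem vecMul_pow_mul_eq_zero_of_forall_lt_card [CommRing R] [Nontrivial R]
    (A : Matrix ι ι R) (B : Matrix ι κ R) {v : ι → R}
    (hv : ∀ k < Fintype.card ι, v ᵥ* (A ^ k * B) = 0) (k : ℕ) : v ᵥ* (A ^ k * B) = 0 := by
  rcases isEmpty_or_nonempty ι with hι | hι
  · ext j
    simp [vecMul, dotProduct]
  have hdeg : (Polynomial.X ^ k %ₘ A.charpoly).natDegree < Fintype.card ι := by
    rw [← A.charpoly_natDegree_eq_dim]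
    refine Polynomial.natDegree_modByMonic_lt _ A.charpoly_monic fun h =>
      Fintype.card_ne_zero (α := ι) ?_
    rw [← A.charpoly_natDegree_eq_dim, h, Polynomial.natDegree_one]
  rw [A.pow_eq_aeval_mod_charpoly, Polynomial.aeval_eq_sum_range' hdeg, Matrix.sum_mul,
    vecMul_sum]
  refine Finset.sum_eq_zero fun i hi => ?_
  rw [smul_mul, vecMul_smul, hv i (Finset.mem_range.1 hi), smul_zero]

theorem mem_spectrum_of_vecMul_eq_smul_s13 [Field K] {A : Matrix ι ι K} {w : ι → K} {μ : K}
    (hw : w ≠ 0) (hwA : w ᵥ* A = μ • w) : μ ∈ spectrum K A := by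
  rw [spectrum.mem_iff, isUnit_iff_isUnit_det, isUnit_iff_ne_zero, not_not,
    ← exists_vecMul_eq_zero_iff]
  refine ⟨w, hw, ?_⟩
  rw [vecMul_sub, hwA, Algebra.algebraMap_eq_smul_one, vecMul_smul, vecMul_one, sub_self]

section UncontrollableSubspace

def uncontrollableSubspace [Semiring R] (A : Matrix ι ι R) (B : Matrix ι κ R) :
    Submodule R (ι → R) :=
  ⨅ k : ℕ, LinearMap.ker (A ^ k * B).vecMulLinear

variable [Semiring R] {A : Matrix ι ι R} {B : Matrix ι κ R} {v : ι → R}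

theorem mem_uncontrollableSubspace :
    v ∈ uncontrollableSubspace A B ↔ ∀ k : ℕ, v ᵥ* (A ^ k * B) = 0 := by
  simp [uncontrollableSubspace, Submodule.mem_iInf]

theorem vecMul_mem_uncontrollableSubspace (hv : v ∈ uncontrollableSubspace A B) :
    v ᵥ* A ∈ uncontrollableSubspace A B := by
  rw [mem_uncontrollableSubspace] at hv ⊢
  intro k
  rw [vecMul_vecMul, ← Matrix.mul_assoc, ← pow_succ', hv]

theorem exists_left_eigenvector_of_uncontrollableSubspace_ne_bot [Field K] [IsAlgClosed K]
    {A : Matrix ι ι K} {B : Matrix ι κ K} (h : uncontrollableSubspace A B ≠ ⊥) :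
    ∃ μ : K, ∃ w : ι → K, w ≠ 0 ∧ w ᵥ* A = μ • w ∧ w ᵥ* B = 0 := by
  obtain ⟨μ, w, hw_mem, hw⟩ := Module.End.exists_hasEigenvector_mem_of_mapsTo A.vecMulLinear h
    fun _ => vecMul_mem_uncontrollableSubspace
  refine ⟨μ, w, hw.2, hw.apply_eq_smul, ?_⟩
  simpa using mem_uncontrollableSubspace.1 hw_mem 0

end UncontrollableSubspace

end Controllability

theorem norm_eq_one_of_left_eigenvector_of_vecMul_eq_zero {𝕜 ι κ : Type*} [RCLike 𝕜]
    [Fintype ι] [Fintype κ]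
    {A X : Matrix ι ι 𝕜} {B R : Matrix ι κ 𝕜} {W : Matrix κ κ 𝕜} (hX : X.PosDef)
    (heq : A * X * Aᴴ - X + B * Rᴴ * Aᴴ + A * R * Bᴴ + B * W * Bᴴ = 0)
    {w : ι → 𝕜} {μ : 𝕜} (hw : w ≠ 0) (hwA : w ᵥ* A = μ • w) (hwB : w ᵥ* B = 0) :
    ‖μ‖ = 1 := by
  have hAstar : Aᴴ *ᵥ star w = star μ • star w := by
    rw [mulVec_conjTranspose, star_star, hwA, star_smul]
  have hBstar : Bᴴ *ᵥ star w = 0 := by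
    rw [mulVec_conjTranspose, star_star, hwB, star_zero]
  have hquad := congrArg (fun M => w ⬝ᵥ M *ᵥ star w) heq
  simp only [add_mulVec, sub_mulVec, zero_mulVec, dotProduct_add, dotProduct_sub,
    dotProduct_zero, ← mulVec_mulVec, hAstar, hBstar, mulVec_smul, mulVec_zero,
    dotProduct_smul, dotProduct_mulVec, hwA, hwB, smul_vecMul, zero_vecMul, smul_dotProduct,
    zero_dotProduct, smul_eq_mul, mul_zero, add_zero] at hquad
  have hpos : 0 < w ᵥ* X ⬝ᵥ star w := by
    simpa [dotProduct_mulVec] using hX.dotProduct_mulVec_pos (x := star w) (by simpa using hw)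
  have hμ : μ * star μ = 1 := by
    have : (μ * star μ - 1) * (w ᵥ* X ⬝ᵥ star w) = 0 := by linear_combination hquad
    exact sub_eq_zero.1 ((mul_eq_zero.1 this).resolve_right hpos.ne')
  rw [RCLike.star_def, RCLike.mul_conj] at hμ
  exact (pow_eq_one_iff_of_nonneg (norm_nonneg μ) two_ne_zero).1 (by exact_mod_cast hμ)

end Matrix

theorem rank_ctrbMatrix_eq_of_uncontrollableSubspace_eq_bot {n m : ℕ}
    {A : Matrix (Fin n) (Fin n) ℂ} {B : Matrix (Fin n) (Fin m) ℂ}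
    (h : uncontrollableSubspace A B = ⊥) : (ctrbMatrix A B).rank = n := by
  suffices LinearIndependent ℂ (ctrbMatrix A B).row by simpa using this.rank_matrix
  rw [← vecMul_injective_iff, ← coe_vecMulLinear, injective_iff_map_eq_zero]
  intro v hv
  rw [← Submodule.mem_bot ℂ, ← h, mem_uncontrollableSubspace]
  refine vecMul_pow_mul_eq_zero_of_forall_lt_card A B fun k hk => funext fun j => ?_
  exact congrFun hv (⟨k, by simpa using hk⟩, j)

theorem controllable_of_cone_posdef_solution_general {n m : ℕ}
    (A : Matrix (Fin n) (Fin n) ℂ) (B : Matrix (Fin n) (Fin m) ℂ)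
    (hA : spectralRadius ℂ A < 1)
    (X : Matrix (Fin n) (Fin n) ℂ) (R : Matrix (Fin n) (Fin m) ℂ)
    (W : Matrix (Fin m) (Fin m) ℂ)
    (hX : X.PosDef)
    (heq : A * X * Aᴴ - X + B * Rᴴ * Aᴴ + A * R * Bᴴ + B * W * Bᴴ = 0) :
    (ctrbMatrix A B).rank = n := by
  refine rank_ctrbMatrix_eq_of_uncontrollableSubspace_eq_bot (by_contra fun hV => ?_)
  obtain ⟨μ, w, hw, hwA, hwB⟩ := exists_left_eigenvector_of_uncontrollableSubspace_ne_bot hV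
  have hμ_lt : ‖μ‖ < 1 := by
    have := (spectrum.nnnorm_le_spectralRadius (mem_spectrum_of_vecMul_eq_smul_s13 hw hwA)).trans_lt hA
    exact_mod_cast this
  exact hμ_lt.ne (norm_eq_one_of_left_eigenvector_of_vecMul_eq_zero hX heq hw hwA hwB)

/-- if the Lyapunov-like equation admits a solution with `X ≻ 0`, `W ≻ 0`
and `[X R; Rᴴ W] ⪰ 0`, then `(A, B)` is controllable. -/
theorem controllable_of_cone_posdef_solution {n m : ℕ}
    (A : Matrix (Fin n) (Fin n) ℂ) (B : Matrix (Fin n) (Fin m) ℂ)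
    (hA : spectralRadius ℂ A < 1)
    (X : Matrix (Fin n) (Fin n) ℂ) (R : Matrix (Fin n) (Fin m) ℂ)
    (W : Matrix (Fin m) (Fin m) ℂ)
    (hX : X.PosDef) (hW : W.PosDef)
    (heq : A * X * Aᴴ - X + B * Rᴴ * Aᴴ + A * R * Bᴴ + B * W * Bᴴ = 0)
    (hpsd : (fromBlocks X R Rᴴ W).PosSemidef) :
    (ctrbMatrix A B).rank = n :=
  controllable_of_cone_posdef_solution_general A B hA X R W hX heq
end

section
/- Let A ∈ ℂ^{n×n} be Schur stable and C ∈ ℂ^{p×n}. Then there exist a Hermitian matrix P and λ ∈ ℝ such that [A B; C D]* diag(P, I) [A B; C D] − diag(P, λI_m) ≺ 0, i.e., the dual SDP of the H∞ analysis problem is strictly feasible for any B, D. -/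
/-!
Gelfand's formula turns `ρ(A) < 1` into a geometric bound `‖Aᵏ‖ ≤ rᵏ` (`r < 1`) for large `k`,
so `P = ∑ₖ (Aᴴ)ᵏ (CᴴC + 1) Aᵏ` converges and solves the Lyapunov equation
`AᴴPA - P = -(CᴴC + 1)`. The upper-left block of the matrix is then `-1`, so by the Schur
complement its negative is positive definite exactly when `λ • 1 - (W + XᴴX)` is, where `X` and
`W` are the off-diagonal and lower-right blocks without `λ`; any `λ > ‖W + XᴴX‖` works.
-/

open Matrix
open scoped ComplexOrder
open Filter
open scoped NNReal ENNReal

section BanachAlgebra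

variable {E : Type*} [NormedRing E] [NormedAlgebra ℂ E] [CompleteSpace E]

theorem eventually_norm_pow_le_of_spectralRadius_lt (a : E) {r : ℝ≥0}
    (ha : spectralRadius ℂ a < r) : ∀ᶠ k : ℕ in atTop, ‖a ^ k‖ ≤ r ^ k := by
  have gelfand := spectrum.pow_nnnorm_pow_one_div_tendsto_nhds_spectralRadius a
  filter_upwards [gelfand.eventually_lt_const ha, eventually_gt_atTop 0] with k hk hk0
  have hlt : (‖a ^ k‖₊ : ℝ≥0∞) < r ^ k := by
    have := ENNReal.rpow_lt_rpow hk (by positivity : (0 : ℝ) < k)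
    rwa [← ENNReal.rpow_mul, one_div, inv_mul_cancel₀ (by positivity), ENNReal.rpow_one,
      ENNReal.rpow_natCast] at this
  exact_mod_cast hlt.le

variable [StarRing E] [NormedStarGroup E]

theorem summable_star_pow_mul_mul_pow (a : E) (ha : spectralRadius ℂ a < 1) (q : E) :
    Summable fun k : ℕ => star (a ^ k) * q * a ^ k := by
  obtain ⟨r, hr, hr1⟩ := ENNReal.lt_iff_exists_nnreal_btwn.mp ha
  have hr1 : (r : ℝ) < 1 := by exact_mod_cast hr1
  refine .of_norm_bounded_eventually_nat
    ((summable_geometric_of_lt_one (r := (r : ℝ) * r) (by positivity)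
      (by nlinarith [r.2])).mul_left ‖q‖) ?_
  filter_upwards [eventually_norm_pow_le_of_spectralRadius_lt a hr] with k hk
  calc ‖star (a ^ k) * q * a ^ k‖ ≤ ‖star (a ^ k)‖ * ‖q‖ * ‖a ^ k‖ := norm_mul₃_le
    _ = ‖q‖ * (‖a ^ k‖ * ‖a ^ k‖) := by rw [norm_star]; ring
    _ ≤ ‖q‖ * ((r : ℝ) * r) ^ k := by rw [mul_pow]; gcongr

theorem exists_isSelfAdjoint_star_mul_mul_sub_eq_neg (a : E) (ha : spectralRadius ℂ a < 1)
    {q : E} (hq : IsSelfAdjoint q) :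
    ∃ p : E, IsSelfAdjoint p ∧ star a * p * a - p = -q := by
  set f : ℕ → E := fun k => star (a ^ k) * q * a ^ k
  have hf : Summable f := summable_star_pow_mul_mul_pow a ha q
  refine ⟨∑' k, f k, ?_, ?_⟩
  · rw [IsSelfAdjoint, tsum_star]
    exact tsum_congr fun k => (hq.conjugate' (a ^ k)).star_eq
  · have hshift : star a * (∑' k, f k) * a = ∑' k, f (k + 1) := by
      rw [← hf.tsum_mul_left, ← (hf.mul_left _).tsum_mul_right]
      congr! 2 with k
      simp only [f, pow_succ, star_mul, mul_assoc]
    rw [hshift, hf.tsum_eq_zero_add]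
    simp [f]

end BanachAlgebra

namespace Matrix

variable {m n 𝕜 : Type*} [Fintype m] [Fintype n] [DecidableEq m] [DecidableEq n] [RCLike 𝕜]

theorem posDef_iff_posSemidef_and_det_ne_zero {A : Matrix n n 𝕜} :
    A.PosDef ↔ A.PosSemidef ∧ A.det ≠ 0 :=
  ⟨fun h => ⟨h.posSemidef, h.det_pos.ne'⟩, fun h => h.1.posDef_iff_det_ne_zero.mpr h.2⟩

theorem PosDef.posDef_fromBlocks₁₁_iff {A : Matrix m m 𝕜} (hA : A.PosDef) (B : Matrix m n 𝕜)
    (D : Matrix n n 𝕜) :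
    (fromBlocks A B Bᴴ D).PosDef ↔ (D - Bᴴ * A⁻¹ * B).PosDef := by
  have : Invertible A := hA.isUnit.invertible
  rw [posDef_iff_posSemidef_and_det_ne_zero, posDef_iff_posSemidef_and_det_ne_zero,
    hA.fromBlocks₁₁ B D, det_fromBlocks₁₁, invOf_eq_nonsing_inv, mul_ne_zero_iff]
  simp [hA.det_pos.ne']

open scoped Matrix.Norms.L2Operator MatrixOrder in
theorem IsHermitian.exists_posDef_smul_one_sub {S : Matrix n n ℂ} (hS : S.IsHermitian) :
    ∃ lam : ℝ, ((lam : ℂ) • (1 : Matrix n n ℂ) - S).PosDef := by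
  have hle : S ≤ algebraMap ℝ (Matrix n n ℂ) ‖S‖ := IsSelfAdjoint.le_algebraMap_norm_self hS
  refine ⟨‖S‖ + 1, ?_⟩
  have hsplit : ((‖S‖ + 1 : ℝ) : ℂ) • (1 : Matrix n n ℂ) - S =
      (algebraMap ℝ (Matrix n n ℂ) ‖S‖ - S) + 1 := by
    rw [Algebra.algebraMap_eq_smul_one, ← Complex.coe_smul, Complex.ofReal_add,
      Complex.ofReal_one, add_smul, one_smul]
    abel
  rw [hsplit]
  exact PosDef.posSemidef_add (le_iff.mp hle) PosDef.one

open scoped Matrix.Norms.L2Operator in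
theorem exists_isHermitian_conjTranspose_mul_mul_sub_eq_neg {A : Matrix n n ℂ}
    (hA : spectralRadius ℂ A < 1) {Q : Matrix n n ℂ} (hQ : Q.IsHermitian) :
    ∃ P : Matrix n n ℂ, P.IsHermitian ∧ Aᴴ * P * A - P = -Q :=
  exists_isSelfAdjoint_star_mul_mul_sub_eq_neg A hA hQ

end Matrix

/-- the dual SDP of `H∞` analysis is strictly feasible: for a Schur stable
`A` and any `B, C, D` there are Hermitian `P` and `λ ∈ ℝ` with
`[A*PA−P+C*C, A*PB+C*D; B*PA+D*C, B*PB+D*D−λI] ≺ 0`. -/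
theorem dual_sdp_strictly_feasible {n m p : ℕ}
    (A : Matrix (Fin n) (Fin n) ℂ) (hA : spectralRadius ℂ A < 1)
    (C : Matrix (Fin p) (Fin n) ℂ)
    (B : Matrix (Fin n) (Fin m) ℂ) (D : Matrix (Fin p) (Fin m) ℂ) :
    ∃ (P : Matrix (Fin n) (Fin n) ℂ) (lam : ℝ), P.IsHermitian ∧
      (-(fromBlocks (Aᴴ * P * A - P + Cᴴ * C) (Aᴴ * P * B + Cᴴ * D)
          (Bᴴ * P * A + Dᴴ * C)
          (Bᴴ * P * B + Dᴴ * D - (lam : ℂ) • (1 : Matrix (Fin m) (Fin m) ℂ)))).PosDef := by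
  obtain ⟨P, hP, hLyap⟩ := exists_isHermitian_conjTranspose_mul_mul_sub_eq_neg hA
    ((isHermitian_conjTranspose_mul_self C).add isHermitian_one)
  set X := Aᴴ * P * B + Cᴴ * D
  set W := Bᴴ * P * B + Dᴴ * D
  have hW : W.IsHermitian :=
    (isHermitian_conjTranspose_mul_mul B hP).add (isHermitian_conjTranspose_mul_self D)
  obtain ⟨lam, hlam⟩ :=
    (hW.add (isHermitian_conjTranspose_mul_self X)).exists_posDef_smul_one_sub
  refine ⟨P, lam, hP, ?_⟩
  have h11 : Aᴴ * P * A - P + Cᴴ * C = -1 := by rw [hLyap]; abel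
  have h21 : Bᴴ * P * A + Dᴴ * C = Xᴴ := by
    simp only [X, conjTranspose_add, conjTranspose_mul, conjTranspose_conjTranspose, hP.eq,
      Matrix.mul_assoc]
  rw [h11, h21, fromBlocks_neg, neg_neg, ← conjTranspose_neg, PosDef.one.posDef_fromBlocks₁₁_iff,
    inv_one, Matrix.mul_one, conjTranspose_neg, Matrix.neg_mul, Matrix.mul_neg, neg_neg,
    neg_sub, sub_sub]
  exact hlam
end

section
/- Let a = 1/2, b = 0, c = 1, d = 1 (scalar system). The primal SDP maximize tr([c*c, c*d; d*c, d*d][X R; R* W]) subject to X = [a b][X R; R* W][a b]*, [X R; R* W] ⪰ 0, tr W = 1 has optimal value 1, attained at V* = [0 0; 0 1]; and the dual SDP minimize λ subject to [a*pa−p+c², a*pb+cd; b*pa+dc, b*pb+d²−λ] ⪯ 0 has optimal value 1 but the infimum is not attained by any finite p. -/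
open Matrix
open scoped ComplexOrder

/-! Since `a = 1/2` is stable, the Lyapunov constraint `X = a X a*` forces `X = 0`, and a positive
semidefinite `V` with a zero diagonal entry has a zero row, so every primal feasible point has
objective `tr W = 1`. The dual constraint says `[3p/4 - 1, -1; -1, λ - 1] ⪰ 0`, i.e.
`(3p/4 - 1)(λ - 1) ≥ 1`: this holds for some `p` exactly when `λ > 1`, with `p → ∞` as `λ → 1`. -/

/-- Primal SDP values for the scalar system `a = 1/2, b = 0, c = 1, d = 1`:
objective `tr([c*c, c*d; d*c, d*d] V)` over `V ⪰ 0` with `[a b] V [a b]* = X` and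
`tr W = 1`. -/
noncomputable def primalValues : Set ℝ :=
  {r | ∃ V : Matrix (Fin 2) (Fin 2) ℂ, V.PosSemidef ∧
    !![(1 / 2 : ℂ), 0] * V * (!![(1 / 2 : ℂ), 0])ᴴ = !![V 0 0] ∧
    V 1 1 = 1 ∧
    r = ((!![(1 : ℂ), 1; 1, 1] * V).trace).re}

/-- Dual SDP feasible values `λ` for the scalar system `a = 1/2, b = 0, c = 1, d = 1`:
`[a p a − p + c², a p b + c d; b p a + d c, b p b + d² − λ] ⪯ 0`. -/
def dualValues : Set ℝ :=
  {lam | ∃ p : ℝ,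
    (-(!![p / 4 - p + 1, 1; 1, 1 - lam] : Matrix (Fin 2) (Fin 2) ℝ)).PosSemidef}

namespace Matrix

theorem posSemidef_fin_two_iff {a b c : ℝ} :
    (!![a, b; b, c] : Matrix (Fin 2) (Fin 2) ℝ).PosSemidef ↔ 0 ≤ a ∧ 0 ≤ c ∧ b ^ 2 ≤ a * c := by
  constructor
  · intro h
    have hdet := h.det_nonneg
    rw [det_fin_two_of] at hdet
    exact ⟨by simpa using h.diag_nonneg (i := 0), by simpa using h.diag_nonneg (i := 1),
      by nlinarith⟩
  · rintro ⟨ha, hc, hb⟩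
    refine .of_dotProduct_mulVec_nonneg ?_ fun x ↦ ?_
    · ext i j
      fin_cases i <;> fin_cases j <;> rfl
    · simp only [star_trivial, dotProduct, mulVec, Fin.sum_univ_two, of_apply, cons_val',
        cons_val_zero, cons_val_one, empty_val', cons_val_fin_one]
      rcases ha.eq_or_lt with rfl | ha
      · obtain rfl : b = 0 := by nlinarith
        nlinarith [mul_nonneg hc (sq_nonneg (x 1))]
      · -- `a · q(x) = (a x₀ + b x₁)² + (a c - b²) x₁²`
        nlinarith [sq_nonneg (a * x 0 + b * x 1), mul_nonneg (sub_nonneg.2 hb) (sq_nonneg (x 1))]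

theorem PosSemidef.apply_eq_zero_of_diag_eq_zero {n 𝕜 : Type*} [RCLike 𝕜]
    {A : Matrix n n 𝕜} (hA : A.PosSemidef) {i : n} (hi : A i i = 0) (j : n) : A i j = 0 := by
  classical
  have hdet := (hA.submatrix ![i, j]).det_nonneg
  have hji : A j i = star (A i j) := (hA.isHermitian.apply j i).symm
  rw [det_fin_two] at hdet
  simp only [submatrix_apply, cons_val_zero, cons_val_one, hi, zero_mul, zero_sub, hji,
    RCLike.star_def, RCLike.mul_conj, neg_nonneg] at hdet
  have : ‖A i j‖ ^ 2 ≤ 0 := by exact_mod_cast hdet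
  simpa using this

end Matrix

theorem lyapunov_constraint_iff (V : Matrix (Fin 2) (Fin 2) ℂ) :
    !![(1 / 2 : ℂ), 0] * V * (!![(1 / 2 : ℂ), 0])ᴴ = !![V 0 0] ↔ V 0 0 = 0 := by
  rw [← Matrix.ext_iff]
  simp [mul_apply, Fin.sum_univ_two, vecMul, dotProduct, map_ofNat]
  constructor
  · intro h
    linear_combination (-4 / 3 : ℂ) * h
  · intro h
    simp [h]

theorem trace_ones_mul (V : Matrix (Fin 2) (Fin 2) ℂ) :
    (!![(1 : ℂ), 1; 1, 1] * V).trace = V 0 0 + V 0 1 + V 1 0 + V 1 1 := by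
  simp [trace, Fin.sum_univ_two, vecMul, dotProduct]
  ring

theorem primal_feasible_optimal :
    (!![(0 : ℂ), 0; 0, 1] : Matrix (Fin 2) (Fin 2) ℂ).PosSemidef ∧
      !![(1 / 2 : ℂ), 0] * !![(0 : ℂ), 0; 0, 1] * (!![(1 / 2 : ℂ), 0])ᴴ =
        !![(!![(0 : ℂ), 0; 0, 1] : Matrix (Fin 2) (Fin 2) ℂ) 0 0] ∧
      (!![(0 : ℂ), 0; 0, 1] : Matrix (Fin 2) (Fin 2) ℂ) 1 1 = 1 ∧
      ((!![(1 : ℂ), 1; 1, 1] * !![(0 : ℂ), 0; 0, 1]).trace).re = 1 := by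
  refine ⟨?_, (lyapunov_constraint_iff _).2 rfl, rfl, by rw [trace_ones_mul]; simp⟩
  simpa [diagonal_fin_two] using
    PosSemidef.diagonal (d := ![(0 : ℂ), 1]) (by simp [Pi.le_def, Fin.forall_fin_two])

theorem primalValues_eq : primalValues = {1} := by
  ext r
  constructor
  · rintro ⟨V, hV, hX, hW, rfl⟩
    have h00 : V 0 0 = 0 := (lyapunov_constraint_iff V).1 hX
    have h01 : V 0 1 = 0 := hV.apply_eq_zero_of_diag_eq_zero h00 1
    have h10 : V 1 0 = 0 := by rw [← hV.isHermitian.apply 1 0, h01, star_zero]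
    rw [trace_ones_mul]
    simp [h00, h01, h10, hW]
  · rintro rfl
    obtain ⟨hV, hX, hW, hobj⟩ := primal_feasible_optimal
    exact ⟨_, hV, hX, hW, hobj.symm⟩

theorem dualValues_eq : dualValues = Set.Ioi 1 := by
  have hneg (p lam : ℝ) : -(!![p / 4 - p + 1, 1; 1, 1 - lam] : Matrix (Fin 2) (Fin 2) ℝ) =
      !![3 * p / 4 - 1, -1; -1, lam - 1] := by
    ext i j
    fin_cases i <;> fin_cases j <;> simp
    ring
  ext lam
  simp only [dualValues, hneg, posSemidef_fin_two_iff, Set.mem_ofPred_eq, Set.mem_Ioi]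
  constructor
  · rintro ⟨p, hp, hlam, hdet⟩
    nlinarith
  · intro hlam
    have hε : 0 < lam - 1 := sub_pos.2 hlam
    obtain ⟨p, hp⟩ : ∃ p : ℝ, 3 * p / 4 - 1 = (lam - 1)⁻¹ := ⟨4 / 3 * (1 + (lam - 1)⁻¹), by ring⟩
    exact ⟨p, by rw [hp]; positivity, hε.le, by rw [hp, inv_mul_cancel₀ hε.ne']; norm_num⟩

/-- Example 2 of the paper: the primal optimal value is `1`, attained at
`V* = [0 0; 0 1]`, while the dual optimal value is `1` but is not attained. -/
theorem scalar_example_dual_not_attained :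
    IsGreatest primalValues 1 ∧
    ((!![(0 : ℂ), 0; 0, 1] : Matrix (Fin 2) (Fin 2) ℂ).PosSemidef ∧
      !![(1 / 2 : ℂ), 0] * !![(0 : ℂ), 0; 0, 1] * (!![(1 / 2 : ℂ), 0])ᴴ =
        !![(!![(0 : ℂ), 0; 0, 1] : Matrix (Fin 2) (Fin 2) ℂ) 0 0] ∧
      (!![(0 : ℂ), 0; 0, 1] : Matrix (Fin 2) (Fin 2) ℂ) 1 1 = 1 ∧
      ((!![(1 : ℂ), 1; 1, 1] * !![(0 : ℂ), 0; 0, 1]).trace).re = 1) ∧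
    IsGLB dualValues 1 ∧ (1 : ℝ) ∉ dualValues := by
  rw [primalValues_eq, dualValues_eq]
  exact ⟨isGreatest_singleton, primal_feasible_optimal, isGLB_Ioi, Set.self_notMem_Ioi⟩
end

section
/- Let A ∈ ℂ^{n×n} be Schur stable and B ∈ ℂ^{n×m}. Suppose w ∈ l₂ has finitely many nonzero entries, with w_k = 0 for k ≥ T, and let x be the state response (x₀ = 0, x_{k+1} = Ax_k + Bw_k). Then ‖Λ(x,w) − Λ_N(x,w)‖_F ≤ ‖A^{N−T} x_T‖₂² ∑_{k=0}^∞ ‖A^k‖₂², and in particular for every ε > 0 there exists N such that ‖Λ(x,w) − Λ_n(x,w)‖_F < ε for all n ≥ N. -/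
open Matrix

/-- Frobenius norm of a complex matrix. -/
noncomputable def frob {ι κ : Type*} [Fintype ι] [Fintype κ] (M : Matrix ι κ ℂ) : ℝ :=
  Real.sqrt (∑ i, ∑ j, ‖M i j‖ ^ 2)

/-!
Once the input has stopped, `x (N + k) = A ^ k *ᵥ x N` for `N ≥ T`, so the tail of the Gramian
series beyond `N` consists of the rank-one matrices `outer (A ^ k *ᵥ x N ⊕ 0)`, of Frobenius norm
`‖A ^ k *ᵥ x N‖² ≤ ‖A ^ k‖_F² ‖x N‖²`. By Gelfand's formula `‖A ^ k‖ ≤ r ^ k` eventually for some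
`r < 1`, so `∑ ‖A ^ k‖_F²` converges and bounds the tail. Convergence of the truncations follows
because `‖x N‖² ≤ ‖A ^ (N - T)‖_F² ‖x T‖²` and the terms of a convergent series tend to zero.
-/

open Filter Topology
open scoped NNReal

theorem norm_tsum_sub_sum_range_le {E : Type*} [NormedAddCommGroup E] [CompleteSpace E]
    {f : ℕ → E} {g : ℕ → ℝ} (hg : Summable g) {N : ℕ} (h : ∀ k, ‖f (k + N)‖ ≤ g k) :
    ‖(∑' k, f k) - ∑ k ∈ Finset.range N, f k‖ ≤ ∑' k, g k := by
  have htail : Summable fun k => f (k + N) := hg.of_norm_bounded h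
  rw [← (summable_nat_add_iff N).1 htail |>.sum_add_tsum_nat_add N, add_sub_cancel_left]
  exact tsum_of_norm_bounded hg.hasSum h

section SpectralRadius

variable {𝔸 : Type*} [NormedRing 𝔸] [NormedAlgebra ℂ 𝔸] [CompleteSpace 𝔸]

theorem eventually_norm_pow_lt_of_spectralRadius_lt {a : 𝔸} {r : ℝ≥0}
    (h : spectralRadius ℂ a < r) : ∀ᶠ n : ℕ in atTop, ‖a ^ n‖ < (r : ℝ) ^ n := by
  have hroot : ∀ᶠ n : ℕ in atTop, ENNReal.ofReal (‖a ^ n‖ ^ (1 / n : ℝ)) < r :=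
    (spectrum.pow_norm_pow_one_div_tendsto_nhds_spectralRadius a).eventually (gt_mem_nhds h)
  filter_upwards [hroot, eventually_gt_atTop 0] with n hn hn0
  rw [ENNReal.ofReal_lt_iff_lt_toReal (by positivity) ENNReal.coe_ne_top, ENNReal.coe_toReal,
    one_div, Real.rpow_inv_lt_iff_of_pos (norm_nonneg _) r.coe_nonneg (by positivity)] at hn
  exact_mod_cast hn

theorem summable_norm_pow_sq_of_spectralRadius_lt_one {a : 𝔸} (h : spectralRadius ℂ a < 1) :
    Summable fun n : ℕ => ‖a ^ n‖ ^ 2 := by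
  obtain ⟨r, hr, hr1⟩ := ENNReal.lt_iff_exists_nnreal_btwn.1 h
  have hr1 : (r : ℝ) ^ 2 < 1 := by
    have : (r : ℝ) < 1 := by exact_mod_cast hr1
    nlinarith [r.coe_nonneg]
  refine Summable.of_norm_bounded_eventually_nat
    (summable_geometric_of_lt_one (by positivity) hr1) ?_
  filter_upwards [eventually_norm_pow_lt_of_spectralRadius_lt hr] with n hn
  rw [Real.norm_of_nonneg (by positivity), ← pow_mul, mul_comm, pow_mul]
  gcongr

end SpectralRadius

theorem response_add_eq_pow_mulVec {R ι κ : Type*} [Semiring R] [Fintype ι] [DecidableEq ι]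
    [Fintype κ] {A : Matrix ι ι R} {B : Matrix ι κ R} {w : ℕ → κ → R} {x : ℕ → ι → R} {T : ℕ}
    (hw : ∀ k, T ≤ k → w k = 0) (hx : ∀ k, x (k + 1) = A *ᵥ x k + B *ᵥ w k)
    {N : ℕ} (hN : T ≤ N) (j : ℕ) : x (N + j) = (A ^ j) *ᵥ x N := by
  induction j with
  | zero => simp
  | succ j ih =>
    rw [← add_assoc, hx, hw _ (by omega), mulVec_zero, add_zero, ih, mulVec_mulVec, ← pow_succ']

section Frobenius

attribute [local instance] Matrix.frobeniusNormedAddCommGroup Matrix.frobeniusNormedRing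
  Matrix.frobeniusNormedAlgebra

variable {ι κ : Type*} [Fintype ι] [Fintype κ]

theorem frob_eq_norm (M : Matrix ι κ ℂ) : frob M = ‖M‖ := by
  simp only [frob, frobenius_norm_def, Real.sqrt_eq_rpow, Real.rpow_two]

theorem frob_outer (v : ι → ℂ) : frob (outer v) = ∑ i, ‖v i‖ ^ 2 := by
  have hentry : ∀ i j, ‖outer v i j‖ ^ 2 = ‖v i‖ ^ 2 * ‖v j‖ ^ 2 := by
    simp [outer, mul_pow]
  simp_rw [frob, hentry, ← Finset.mul_sum, ← Finset.sum_mul]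
  exact Real.sqrt_mul_self (Finset.sum_nonneg fun i _ => by positivity)

theorem frob_outer_sumElim (a : ι → ℂ) (b : κ → ℂ) :
    frob (outer (Sum.elim a b)) = ∑ i, ‖a i‖ ^ 2 + ∑ j, ‖b j‖ ^ 2 := by
  rw [frob_outer, Fintype.sum_sum_type]
  rfl

theorem sum_norm_sq_mulVec_le (M : Matrix ι κ ℂ) (u : κ → ℂ) :
    ∑ i, ‖(M *ᵥ u) i‖ ^ 2 ≤ frob M ^ 2 * ∑ j, ‖u j‖ ^ 2 := by
  have h : ‖WithLp.toLp 2 (M *ᵥ u)‖ ≤ ‖M‖ * ‖WithLp.toLp 2 u‖ :=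
    calc ‖WithLp.toLp 2 (M *ᵥ u)‖ = ‖replicateCol (Fin 1) (M *ᵥ u)‖ :=
          (frobenius_norm_replicateCol _).symm
      _ ≤ ‖M‖ * ‖replicateCol (Fin 1) u‖ := replicateCol_mulVec M u ▸ frobenius_norm_mul _ _
      _ = ‖M‖ * ‖WithLp.toLp 2 u‖ := congrArg _ (frobenius_norm_replicateCol _)
  have hsq := pow_le_pow_left₀ (norm_nonneg _) h 2
  rwa [EuclideanSpace.norm_sq_eq, mul_pow, EuclideanSpace.norm_sq_eq, ← frob_eq_norm] at hsq

variable [DecidableEq ι]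

theorem summable_frob_pow_sq {A : Matrix ι ι ℂ} (hA : spectralRadius ℂ A < 1) :
    Summable fun k : ℕ => frob (A ^ k) ^ 2 := by
  simpa only [frob_eq_norm] using summable_norm_pow_sq_of_spectralRadius_lt_one hA

theorem frob_gramian_sub_truncation_le {A : Matrix ι ι ℂ} {B : Matrix ι κ ℂ}
    (hS : Summable fun k : ℕ => frob (A ^ k) ^ 2) {w : ℕ → κ → ℂ} {x : ℕ → ι → ℂ} {T : ℕ}
    (hw : ∀ k, T ≤ k → w k = 0) (hx : ∀ k, x (k + 1) = A *ᵥ x k + B *ᵥ w k)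
    {N : ℕ} (hN : T ≤ N) :
    frob ((∑' k, outer (Sum.elim (x k) (w k))) -
        ∑ k ∈ Finset.range N, outer (Sum.elim (x k) (w k))) ≤
      (∑ i, ‖x N i‖ ^ 2) * ∑' k, frob (A ^ k) ^ 2 := by
  rw [frob_eq_norm, mul_comm, ← tsum_mul_right]
  -- Completeness must be supplied by hand: the Frobenius uniformity is the product one only up to
  -- unfolding, which instance search does not do.
  refine @norm_tsum_sub_sum_range_le _ _ (instCompleteSpace _ _ _) _ _ (hS.mul_right _) N
    fun k => ?_
  rw [← frob_eq_norm, frob_outer_sumElim, hw _ (by omega), add_comm k N,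
    response_add_eq_pow_mulVec hw hx hN]
  simpa using sum_norm_sq_mulVec_le (A ^ k) (x N)

end Frobenius

theorem gramian_truncation_bound_general {n m : ℕ}
    (A : Matrix (Fin n) (Fin n) ℂ) (B : Matrix (Fin n) (Fin m) ℂ)
    (hA : spectralRadius ℂ A < 1)
    (w : ℕ → Fin m → ℂ) (T : ℕ) (hw : ∀ k, T ≤ k → w k = 0)
    (x : ℕ → Fin n → ℂ)
    (hx : ∀ k, x (k + 1) = A.mulVec (x k) + B.mulVec (w k)) :
    (∀ N, T ≤ N →
      frob ((∑' k, outer (Sum.elim (x k) (w k))) -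
          ∑ k ∈ Finset.range N, outer (Sum.elim (x k) (w k))) ≤
        (∑ i, ‖(A ^ (N - T)).mulVec (x T) i‖ ^ 2) * ∑' k, (frob (A ^ k)) ^ 2) ∧
    ∀ ε > (0 : ℝ), ∃ N : ℕ, ∀ n', N ≤ n' →
      frob ((∑' k, outer (Sum.elim (x k) (w k))) -
          ∑ k ∈ Finset.range n', outer (Sum.elim (x k) (w k))) < ε := by
  have hS := summable_frob_pow_sq hA
  have hxT : ∀ N, T ≤ N → x N = (A ^ (N - T)) *ᵥ x T := fun N hN => by
    simpa [Nat.add_sub_cancel' hN] using response_add_eq_pow_mulVec hw hx le_rfl (N - T)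
  refine ⟨fun N hN => hxT N hN ▸ frob_gramian_sub_truncation_le hS hw hx hN, fun ε hε => ?_⟩
  have hlim : Tendsto (fun N => frob (A ^ (N - T)) ^ 2 * (∑ i, ‖x T i‖ ^ 2) *
      ∑' k, frob (A ^ k) ^ 2) atTop (𝓝 0) := by
    simpa using ((hS.tendsto_atTop_zero.comp (tendsto_sub_atTop_nat T)).mul_const _).mul_const _
  obtain ⟨N, hN⟩ := eventually_atTop.1
    ((hlim.eventually (gt_mem_nhds hε)).and (eventually_ge_atTop T))
  refine ⟨N, fun n' hn' => ?_⟩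
  obtain ⟨hlt, hTn'⟩ := hN n' hn'
  refine (frob_gramian_sub_truncation_le hS hw hx hTn').trans_lt (lt_of_le_of_lt ?_ hlt)
  rw [hxT n' hTn']
  exact mul_le_mul_of_nonneg_right (sum_norm_sq_mulVec_le _ _) (tsum_nonneg fun k => by positivity)

/-- truncation error bound for the gramian of the response to a finitely
supported input, and convergence of the truncated gramians. -/
theorem gramian_truncation_bound {n m : ℕ}
    (A : Matrix (Fin n) (Fin n) ℂ) (B : Matrix (Fin n) (Fin m) ℂ)
    (hA : spectralRadius ℂ A < 1)
    (w : ℕ → Fin m → ℂ) (T : ℕ) (hw : ∀ k, T ≤ k → w k = 0)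
    (x : ℕ → Fin n → ℂ) (hx0 : x 0 = 0)
    (hx : ∀ k, x (k + 1) = A.mulVec (x k) + B.mulVec (w k)) :
    (∀ N, T ≤ N →
      frob ((∑' k, outer (Sum.elim (x k) (w k))) -
          ∑ k ∈ Finset.range N, outer (Sum.elim (x k) (w k))) ≤
        (∑ i, ‖(A ^ (N - T)).mulVec (x T) i‖ ^ 2) * ∑' k, (frob (A ^ k)) ^ 2) ∧
    ∀ ε > (0 : ℝ), ∃ N : ℕ, ∀ n', N ≤ n' →
      frob ((∑' k, outer (Sum.elim (x k) (w k))) -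
          ∑ k ∈ Finset.range n', outer (Sum.elim (x k) (w k))) < ε :=
  gramian_truncation_bound_general A B hA w T hw x hx
end
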